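/- arXiv:2501.10220 — 9 statements merged into one kernel-verified Lean document; each statement's English description precedes it below -/
import Mathlib

section
/- With β and a(n) as above (β(-1)=0, β(0)=1, the recursion (q^n-1)β(n) = (q^n+q^{n-1}-a)β(n-1) - (q^{n-1}-q)β(n-2), and a(n) = (q^n+1) - (q^n-1)β(n)/β(n-1)), assuming β(n) > 0 for all n ≥ 0 and a(n) ≠ q^n + 1 for the relevant n, the a-invariants satisfy the recursion a(n+1) = 1 - q^n + a + (q^n - q)(q^n - 1)/(q^n + 1 - a(n)) for all n ≥ 1. -/
/-- With `Q = q ^ n` and `bᵢ = β (n - 1 + i)`: dividing the three-term recursion for `β` by `β n`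
turns it into a Möbius recursion for the ratios `β n / β (n - 1)`, which is what the `a`-invariants
encode. -/
theorem ratio_step_of_three_term_recurrence {K : Type*} [Field K] {Q q a b₀ b₁ b₂ : K}
    (hQ : Q - 1 ≠ 0) (hb₁ : b₁ ≠ 0)
    (hrec : (Q * q - 1) * b₂ = (Q * q + Q - a) * b₁ - (Q - q) * b₀) :
    (Q * q + 1) - (Q * q - 1) * b₂ / b₁
      = 1 - Q + a + (Q - q) * (Q - 1) / (Q + 1 - ((Q + 1) - (Q - 1) * b₁ / b₀)) := by
  rw [show Q + 1 - ((Q + 1) - (Q - 1) * b₁ / b₀) = (Q - 1) * b₁ / b₀ by ring]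
  field_simp
  linear_combination -hrec

theorem a_recursion_general (q a : ℝ) (hq : 2 ≤ q) (β A : ℤ → ℝ)
    (hrec : ∀ n : ℤ, 1 ≤ n →
      (q ^ n - 1) * β n = (q ^ n + q ^ (n - 1) - a) * β (n - 1)
        - (q ^ (n - 1) - q) * β (n - 2))
    (hβ : ∀ n : ℤ, 0 ≤ n → 0 < β n)
    (hA : ∀ n : ℤ, 1 ≤ n → A n = (q ^ n + 1) - (q ^ n - 1) * β n / β (n - 1)) :
    ∀ n : ℤ, 1 ≤ n →
      A (n + 1) = 1 - q ^ n + a + (q ^ n - q) * (q ^ n - 1) / (q ^ n + 1 - A n) := by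
  intro n hn
  have hpow : q ^ (n + 1) = q ^ n * q := zpow_add_one₀ (by positivity) n
  have hQ : q ^ n - 1 ≠ 0 := (sub_pos.2 (one_lt_zpow₀ (by linarith) (by omega))).ne'
  have hrec' := hrec (n + 1) (by omega)
  rw [add_sub_cancel_right, show n + 1 - 2 = n - 1 by ring, hpow] at hrec'
  rw [hA (n + 1) (by omega), hA n hn, add_sub_cancel_right, hpow]
  exact ratio_step_of_three_term_recurrence hQ (hβ n (by omega)).ne' hrec'

/-- Structural recursion for the a-invariants:
a(n+1) = 1 - q^n + a + (q^n - q)(q^n - 1)/(q^n + 1 - a(n)). -/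
theorem a_recursion (q a : ℝ) (hq : 2 ≤ q) (β A : ℤ → ℝ)
    (h0 : β (-1) = 0) (h1 : β 0 = 1)
    (hrec : ∀ n : ℤ, 1 ≤ n →
      (q ^ n - 1) * β n = (q ^ n + q ^ (n - 1) - a) * β (n - 1)
        - (q ^ (n - 1) - q) * β (n - 2))
    (hβ : ∀ n : ℤ, 0 ≤ n → 0 < β n)
    (hA : ∀ n : ℤ, 1 ≤ n → A n = (q ^ n + 1) - (q ^ n - 1) * β n / β (n - 1))
    (hne : ∀ n : ℤ, 1 ≤ n → A n ≠ q ^ n + 1) :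
    ∀ n : ℤ, 1 ≤ n →
      A (n + 1) = 1 - q ^ n + a + (q ^ n - q) * (q ^ n - 1) / (q ^ n + 1 - A n) :=
  a_recursion_general q a hq β A hrec hβ hA
end

section
/- Let q ≥ 2 and |a| ≤ 2√q, and define a(3) = 1 - q² + a + (q² - q)(q² - 1)/(q² + q - a). Then |a(3) - (2 + 2a - 2q - 3a/q)| ≤ C/q for an absolute constant C (e.g. C = 50) valid for all q ≥ 16. -/
/-!
Over the common denominator `q (q² + q - a)` the error term is
`(q (4a + a²) - 3a²) / (q (q² + q - a))`. The Hasse bound gives `a² ≤ 4q` and, once `√q ≥ 4`,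
`|a| ≤ q / 2`; so the numerator is at most `7q²` in absolute value while the denominator is
at least `q³`, and the error is at most `7 / q`.
-/

lemma sq_le_four_mul_of_abs_le_two_sqrt {q a : ℝ} (hq : 0 ≤ q) (ha : |a| ≤ 2 * √q) :
    a ^ 2 ≤ 4 * q := by
  calc a ^ 2 = |a| ^ 2 := (sq_abs a).symm
    _ ≤ (2 * √q) ^ 2 := pow_le_pow_left₀ (abs_nonneg a) ha 2
    _ = 4 * q := by rw [mul_pow, Real.sq_sqrt hq]; norm_num

lemma abs_le_half_of_abs_le_two_sqrt {q a : ℝ} (hq : 16 ≤ q) (ha : |a| ≤ 2 * √q) :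
    |a| ≤ q / 2 := by
  have h4 : 4 ≤ √q := (Real.le_sqrt (by norm_num) (by linarith)).mpr (by linarith)
  have hsq : √q * √q = q := Real.mul_self_sqrt (by linarith)
  nlinarith

lemma a_three_sub_eq {K : Type*} [Field K] {q a : K} (hq : q ≠ 0) (hD : q ^ 2 + q - a ≠ 0) :
    (1 - q ^ 2 + a + (q ^ 2 - q) * (q ^ 2 - 1) / (q ^ 2 + q - a))
        - (2 + 2 * a - 2 * q - 3 * a / q)
      = (q * (4 * a + a ^ 2) - 3 * a ^ 2) / (q * (q ^ 2 + q - a)) := by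
  rw [add_div' _ _ _ hD, sub_div' hq, div_sub_div _ _ hD hq,
    div_eq_div_iff (mul_ne_zero hD hq) (mul_ne_zero hq hD)]
  ring

lemma abs_a_three_numerator_le {q a : ℝ} (hq : 0 ≤ q) (ha : |a| ≤ q / 2) (ha2 : a ^ 2 ≤ 4 * q) :
    |q * (4 * a + a ^ 2) - 3 * a ^ 2| ≤ 7 * q ^ 2 := by
  have ha2' : a ^ 2 ≤ q ^ 2 / 4 := by
    rw [← sq_abs]; nlinarith [abs_nonneg a]
  calc |q * (4 * a + a ^ 2) - 3 * a ^ 2| ≤ 4 * q * |a| + q * a ^ 2 + 3 * a ^ 2 := by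
        rw [abs_le]; constructor <;> nlinarith [abs_nonneg a, le_abs_self a, neg_abs_le a]
    _ ≤ 4 * q * (q / 2) + q * (4 * q) + 3 * (q ^ 2 / 4) := by gcongr
    _ ≤ 7 * q ^ 2 := by nlinarith

/-- Asymptotic for a(3): |a(3) - (2 + 2a - 2q - 3a/q)| ≤ 50/q for q ≥ 16. -/
theorem a_three_asymptotic (q a : ℝ) (hq : 16 ≤ q) (ha : |a| ≤ 2 * Real.sqrt q) :
    |(1 - q ^ 2 + a + (q ^ 2 - q) * (q ^ 2 - 1) / (q ^ 2 + q - a))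
      - (2 + 2 * a - 2 * q - 3 * a / q)| ≤ 50 / q := by
  have hq0 : 0 < q := by linarith
  have ha_half := abs_le_half_of_abs_le_two_sqrt hq ha
  have ha_le : a ≤ q := by linarith [le_abs_self a]
  have hD : q ^ 2 ≤ q ^ 2 + q - a := by linarith
  have hD0 : 0 < q ^ 2 + q - a := lt_of_lt_of_le (by positivity) hD
  rw [a_three_sub_eq hq0.ne' hD0.ne', abs_div, abs_of_pos (mul_pos hq0 hD0)]
  calc |q * (4 * a + a ^ 2) - 3 * a ^ 2| / (q * (q ^ 2 + q - a))
      ≤ 7 * q ^ 2 / (q * q ^ 2) := by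
        gcongr
        exact abs_a_three_numerator_le hq0.le ha_half
          (sq_le_four_mul_of_abs_le_two_sqrt hq0.le ha)
    _ = 7 / q := by field_simp
    _ ≤ 50 / q := by gcongr; norm_num
end

section
/- Fix n ≥ 3. There exist constants C > 0 and Q₀ such that for all real q ≥ Q₀ and all real a with |a| ≤ 2√q, the quantities a(k) defined by a(1) = a and a(k+1) = 1 - q^k + a + (q^k - q)(q^k - 1)/(q^k + 1 - a(k)) satisfy |a(n) - ((5-n) + (n-1)a - (n-1)q + 3a/q·(-1))| = |a(n) - ((5-n) + (n-1)a - (n-1)q - 3a/q)| ≤ C/q. -/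
/-!
Let `M k = (5 - k) + (k - 1) a - (k - 1) q - 3 a / q`. Since `M (k + 1) = M k + a - q - 1`, the
recursion can be rewritten as
`a(k+1) - M (k+1) = (a(k) - M k) + (a(k) - 2) (a(k) - q - 1) / (q^k + 1 - a(k))`.
For `|a| ≤ q` every `a(k)` is `O(q)`, so when `k ≥ 3` the last term is `O(q^2 / q^k) = O(1/q)`,
and the errors `a(k) - M k` stay `O(1/q)` once they are so at `k = 3`. There one computes
`a(3) - M 3 = a ((q - 3) a + 4 q) / (q (q^2 + q - a))`, which is `O(1/q)` because the Hasse bound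
gives `a^2 ≤ 4 q`.
-/

noncomputable def mainTerm (k : ℕ) (q a : ℝ) : ℝ :=
  (5 - (k : ℝ)) + ((k : ℝ) - 1) * a - ((k : ℝ) - 1) * q - 3 * a / q

def IsRankInvariantSeq (q a : ℝ) (A : ℕ → ℝ) : Prop :=
  A 1 = a ∧ ∀ k : ℕ, 1 ≤ k →
    A (k + 1) = 1 - q ^ k + a + (q ^ k - q) * (q ^ k - 1) / (q ^ k + 1 - A k)

def RefinedAsymptotic (n : ℕ) : Prop :=
  ∃ C > (0 : ℝ), ∃ Q₀ : ℝ, ∀ q : ℝ, Q₀ ≤ q → ∀ a : ℝ, |a| ≤ 2 * Real.sqrt q →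
    ∀ A : ℕ → ℝ, IsRankInvariantSeq q a A → |A n - mainTerm n q a| ≤ C / q

lemma mainTerm_succ (k : ℕ) (q a : ℝ) :
    mainTerm (k + 1) q a = mainTerm k q a + a - q - 1 := by
  simp only [mainTerm]
  push_cast
  ring

lemma abs_mainTerm_le (k : ℕ) {q a : ℝ} (hq : 1 ≤ q) (ha : |a| ≤ q) :
    |mainTerm k q a| ≤ (3 * k + 10) * q := by
  have hq0 : 0 < q := by linarith
  have hK : (0 : ℝ) ≤ k := k.cast_nonneg
  obtain ⟨ha_lo, ha_hi⟩ := abs_le.mp ha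
  have haq : |a / q| ≤ 1 := by
    rw [abs_div, abs_of_pos hq0]
    exact div_le_one_of_le₀ ha hq0.le
  obtain ⟨haq_lo, haq_hi⟩ := abs_le.mp haq
  rw [mainTerm, mul_div_assoc, abs_le]
  constructor <;> nlinarith [mul_nonneg hK (by linarith : 0 ≤ q - a),
    mul_nonneg hK (by linarith : 0 ≤ q + a), mul_nonneg hK (by linarith : 0 ≤ q - 1)]

lemma sq_le_of_abs_le_two_sqrt {q a : ℝ} (hq : 0 ≤ q) (ha : |a| ≤ 2 * Real.sqrt q) :
    a ^ 2 ≤ 4 * q := by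
  have := sq_le_sq' (abs_le.mp ha).1 (abs_le.mp ha).2
  rw [mul_pow, Real.sq_sqrt hq] at this
  linarith

lemma abs_le_of_abs_le_two_sqrt {q a : ℝ} (hq : 4 ≤ q) (ha : |a| ≤ 2 * Real.sqrt q) :
    |a| ≤ q := by
  have := sq_le_of_abs_le_two_sqrt (by linarith) ha
  exact abs_le_of_sq_le_sq (by nlinarith) (by linarith)

lemma recursion_step_eq {F : Type*} [Field F] {Q q a x : F} (h : Q + 1 - x ≠ 0) :
    1 - Q + a + (Q - q) * (Q - 1) / (Q + 1 - x)
      = x + a - q - 1 + (x - 2) * (x - q - 1) / (Q + 1 - x) := by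
  field_simp
  ring

lemma half_le_denominator {x q Q B : ℝ} (hq : 1 ≤ q) (hx : |x| ≤ B * q) (hB : 2 * B ≤ q ^ 2)
    (hQ : q ^ 3 ≤ Q) : Q / 2 ≤ Q + 1 - x := by
  have := (abs_le.mp hx).2
  nlinarith

lemma abs_correction_le {x q Q B : ℝ} (hq : 1 ≤ q) (hx : |x| ≤ B * q) (hQ : q ^ 3 ≤ Q)
    (hD : Q / 2 ≤ Q + 1 - x) :
    |(x - 2) * (x - q - 1) / (Q + 1 - x)| ≤ 2 * (B + 2) ^ 2 / q := by
  have hq0 : 0 < q := by linarith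
  have hB0 : 0 ≤ B := by nlinarith [abs_nonneg x]
  have hD0 : 0 < Q + 1 - x := by linarith [(by positivity : 0 < q ^ 3)]
  obtain ⟨hx1, hx2⟩ := abs_le.mp hx
  have h1 : |x - 2| ≤ (B + 2) * q := by rw [abs_le]; constructor <;> nlinarith
  have h2 : |x - q - 1| ≤ (B + 2) * q := by rw [abs_le]; constructor <;> nlinarith
  have hnum : |(x - 2) * (x - q - 1)| ≤ (B + 2) ^ 2 * q ^ 2 := by
    rw [abs_mul]
    calc |x - 2| * |x - q - 1| ≤ ((B + 2) * q) * ((B + 2) * q) :=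
          mul_le_mul h1 h2 (abs_nonneg _) (by positivity)
      _ = (B + 2) ^ 2 * q ^ 2 := by ring
  rw [abs_div, abs_of_pos hD0, div_le_div_iff₀ hD0 hq0]
  calc |(x - 2) * (x - q - 1)| * q ≤ (B + 2) ^ 2 * q ^ 3 := by nlinarith
    _ ≤ (B + 2) ^ 2 * Q := by gcongr
    _ ≤ 2 * (B + 2) ^ 2 * (Q + 1 - x) := by nlinarith [sq_nonneg (B + 2)]

lemma IsRankInvariantSeq.three_sub_mainTerm {q a : ℝ} {A : ℕ → ℝ} (hA : IsRankInvariantSeq q a A)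
    (hq : q ≠ 0) (hD : q ^ 2 + q - a ≠ 0) :
    A 3 - mainTerm 3 q a = a * ((q - 3) * a + 4 * q) / (q * (q ^ 2 + q - a)) := by
  have h2 : A 2 = 1 - q + a := by simpa using hA.2 1 le_rfl
  rw [hA.2 2 one_le_two, h2, show q ^ 2 + 1 - (1 - q + a) = q ^ 2 + q - a by ring,
    eq_div_iff (mul_ne_zero hq hD), mainTerm]
  push_cast
  linear_combination q * div_mul_cancel₀ ((q ^ 2 - q) * (q ^ 2 - 1)) hD
    + (q ^ 2 + q - a) * div_mul_cancel₀ (3 * a) hq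

lemma refinedAsymptotic_three : RefinedAsymptotic 3 := by
  refine ⟨8, by norm_num, 4, fun q hq a ha A hA => ?_⟩
  have hq0 : 0 < q := by linarith
  have ha2 : a ^ 2 ≤ 4 * q := sq_le_of_abs_le_two_sqrt hq0.le ha
  obtain ⟨ha_lo, ha_hi⟩ := abs_le.mp (abs_le_of_abs_le_two_sqrt hq ha)
  have hden : q ^ 3 ≤ q * (q ^ 2 + q - a) := by nlinarith
  have hnum : |a * ((q - 3) * a + 4 * q)| ≤ 8 * q ^ 2 := by
    rw [show a * ((q - 3) * a + 4 * q) = (q - 3) * a ^ 2 + 4 * q * a by ring, abs_le]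
    constructor <;> nlinarith [mul_le_mul_of_nonneg_left ha2 (by linarith : 0 ≤ q - 3),
      mul_nonneg (by linarith : 0 ≤ q - 3) (sq_nonneg a), mul_nonneg hq0.le (by linarith : 0 ≤ q - a),
      mul_nonneg hq0.le (by linarith : 0 ≤ q + a)]
  have hden0 : 0 < q * (q ^ 2 + q - a) := lt_of_lt_of_le (by positivity) hden
  rw [hA.three_sub_mainTerm hq0.ne' (by nlinarith), abs_div, abs_of_pos hden0,
    div_le_div_iff₀ hden0 hq0]
  calc |a * ((q - 3) * a + 4 * q)| * q ≤ 8 * q ^ 2 * q := by gcongr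
    _ = 8 * q ^ 3 := by ring
    _ ≤ 8 * (q * (q ^ 2 + q - a)) := by gcongr

lemma RefinedAsymptotic.succ {k : ℕ} (hk : 3 ≤ k) (h : RefinedAsymptotic k) :
    RefinedAsymptotic (k + 1) := by
  obtain ⟨C, hC, Q₀, hE⟩ := h
  set B : ℝ := 3 * k + 10 + C
  refine ⟨C + 2 * (B + 2) ^ 2, by positivity, max Q₀ (max 4 (2 * B)),
    fun q hq a ha A hA => ?_⟩
  obtain ⟨hQ₀, hq4, hqB⟩ : Q₀ ≤ q ∧ 4 ≤ q ∧ 2 * B ≤ q := by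
    simpa only [max_le_iff] using hq
  have hq1 : 1 ≤ q := by linarith
  have hEk := hE q hQ₀ a ha A hA
  have hAk : |A k| ≤ B * q := by
    have hM := abs_mainTerm_le k hq1 (abs_le_of_abs_le_two_sqrt hq4 ha)
    have hCq : C / q ≤ C * q := (div_le_self hC.le hq1).trans (le_mul_of_one_le_right hC.le hq1)
    linarith [abs_sub_abs_le_abs_sub (A k) (mainTerm k q a)]
  have hQ : q ^ 3 ≤ q ^ k := pow_le_pow_right₀ hq1 hk
  have hD := half_le_denominator hq1 hAk (by nlinarith) hQ
  rw [hA.2 k (by omega), recursion_step_eq (by linarith [(by positivity : 0 < q ^ k)]),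
    mainTerm_succ]
  calc _ = |(A k - mainTerm k q a) + (A k - 2) * (A k - q - 1) / (q ^ k + 1 - A k)| := by
        ring_nf
    _ ≤ C / q + 2 * (B + 2) ^ 2 / q :=
        (abs_add_le _ _).trans (add_le_add hEk (abs_correction_le hq1 hAk hQ hD))
    _ = (C + 2 * (B + 2) ^ 2) / q := by ring

/-- Theorem 15: a(n) = (5-n) + (n-1)a - (n-1)q - 3a/q + O(1/q), uniformly
over |a| ≤ 2√q. -/
theorem a_n_refined_asymptotic (n : ℕ) (hn : 3 ≤ n) :
    ∃ C > (0 : ℝ), ∃ Q₀ : ℝ, ∀ q : ℝ, Q₀ ≤ q → ∀ a : ℝ, |a| ≤ 2 * Real.sqrt q →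
      ∀ A : ℕ → ℝ, A 1 = a →
        (∀ k : ℕ, 1 ≤ k →
          A (k + 1) = 1 - q ^ k + a + (q ^ k - q) * (q ^ k - 1) / (q ^ k + 1 - A k)) →
        |A n - ((5 - (n : ℝ)) + ((n : ℝ) - 1) * a - ((n : ℝ) - 1) * q - 3 * a / q)|
          ≤ C / q := by
  obtain ⟨C, hC, Q₀, h⟩ : RefinedAsymptotic n :=
    Nat.le_induction refinedAsymptotic_three (fun k hk ih => ih.succ hk) n hn
  exact ⟨C, hC, Q₀, fun q hq a ha A hA1 hrec => h q hq a ha A ⟨hA1, hrec⟩⟩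
end

section
/- Fix n ≥ 3. There exist constants C > 0 and Q₀ such that for all real q ≥ Q₀ and all real a with |a| ≤ 2√q, the recursively defined a(n) satisfies |a(n) - ((5-n) + (n-1)a - (n-1)q)| ≤ C/√q. -/
/-!
Write `L k = (5 - k) + (k - 1) a - (k - 1) q`. One step of the recurrence is a Möbius map in `A k`,
and dividing `(q^k - q)(q^k - 1)` by `q^k + 1 - L k` gives
`A (k+1) - L (k+1) = ((q + 1 - L k)(2 - L k) + (q^k + L k - q - 2)(A k - L k)) / (q^k + 1 - A k)`.
For `k ≥ 3` the denominator is of size `q^k ≥ q^3`, while `q + 1 - L k` and `2 - L k` are `O(kq)`,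
so the error `A k - L k` changes by `O(k²/√q)` per step. At `k = 2` the error is `-2`, but there the
formula gives exactly `A 3 - L 3 = (a² - 3aq + a) / (q² + q - a) = O(1/√q)` because `|a| ≤ 2√q`.
-/

open Real

def leadingTerm (n : ℕ) (q a : ℝ) : ℝ := (5 - (n : ℝ)) + ((n : ℝ) - 1) * a - ((n : ℝ) - 1) * q

noncomputable def recStep (q a u x : ℝ) : ℝ := 1 - u + a + (u - q) * (u - 1) / (u + 1 - x)

lemma leadingTerm_succ (n : ℕ) (q a : ℝ) :
    leadingTerm (n + 1) q a = leadingTerm n q a + a - q - 1 := by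
  unfold leadingTerm; push_cast; ring

lemma recStep_sub_eq {q a u L x : ℝ} (hD : u + 1 - x ≠ 0) :
    recStep q a u x - (L + a - q - 1) =
      ((q + 1 - L) * (2 - L) + (u + L - q - 2) * (x - L)) / (u + 1 - x) := by
  unfold recStep
  field_simp
  ring

lemma abs_recStep_sub_le {q a u L x : ℝ} (hu : 0 < u) (hD : u / 2 ≤ u + 1 - x) :
    |recStep q a u x - (L + a - q - 1)| ≤
      2 * (|q + 1 - L| * |2 - L| + |u + L - q - 2| * |x - L|) / u := by
  have hDpos : 0 < u + 1 - x := by linarith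
  rw [recStep_sub_eq hDpos.ne', abs_div, abs_of_pos hDpos]
  calc _ ≤ (|q + 1 - L| * |2 - L| + |u + L - q - 2| * |x - L|) / (u / 2) := by
        refine div_le_div₀ (by positivity) ?_ (by positivity) hD
        refine (abs_add_le _ _).trans ?_
        rw [abs_mul, abs_mul]
    _ = _ := by field_simp

lemma leadingTerm_le_two {n : ℕ} (hn : 3 ≤ n) {q a : ℝ} (ha : a ≤ q) : leadingTerm n q a ≤ 2 := by
  have hn' : (3 : ℝ) ≤ n := by exact_mod_cast hn
  unfold leadingTerm
  nlinarith

lemma abs_sub_leadingTerm_le {n : ℕ} (hn : 3 ≤ n) {q a c : ℝ} (hq : 1 ≤ q) (ha : |a| ≤ q)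
    (hc₀ : 0 ≤ c) (hc : c ≤ q + 2) : |c - leadingTerm n q a| ≤ 3 * n * q := by
  have hn' : (3 : ℝ) ≤ n := by exact_mod_cast hn
  obtain ⟨ha₁, ha₂⟩ := abs_le.mp ha
  unfold leadingTerm
  rw [abs_le]
  constructor <;> nlinarith

lemma abs_le_self_of_abs_le_two_mul_sqrt {q a : ℝ} (hq : 4 ≤ q) (ha : |a| ≤ 2 * √q) : |a| ≤ q := by
  have hs : 2 ≤ √q := le_sqrt_of_sq_le (by linarith)
  calc |a| ≤ 2 * √q := ha
    _ ≤ √q * √q := by gcongr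
    _ = q := mul_self_sqrt (by linarith)

lemma abs_recStep_sq_sub_leadingTerm_three_le {q a : ℝ} (hq : 4 ≤ q) (ha : |a| ≤ 2 * √q) :
    |recStep q a (q ^ 2) (1 - q + a) - leadingTerm 3 q a| ≤ 12 / √q := by
  have haq := abs_le_self_of_abs_le_two_mul_sqrt hq ha
  obtain ⟨ha₁, ha₂⟩ := abs_le.mp haq
  have hss : √q * √q = q := mul_self_sqrt (by linarith)
  have hD : 0 < q ^ 2 + q - a := by nlinarith
  have hstep : recStep q a (q ^ 2) (1 - q + a) - leadingTerm 3 q a =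
      (a ^ 2 - 3 * a * q + a) / (q ^ 2 + q - a) := by
    have hD' : q ^ 2 + 1 - (1 - q + a) = q ^ 2 + q - a := by ring
    rw [leadingTerm_succ 2, recStep_sub_eq (hD' ▸ hD.ne'), hD']
    unfold leadingTerm
    push_cast
    ring
  have hnum : |a ^ 2 - 3 * a * q + a| ≤ 12 * q * √q := by
    have hsq : a ^ 2 ≤ 4 * q := by nlinarith [sq_abs a, abs_nonneg a]
    have hmul : |3 * a * q| ≤ 6 * q * √q := by
      rw [abs_mul, abs_mul, abs_of_pos (by norm_num : (0 : ℝ) < 3), abs_of_pos (by linarith : 0 < q)]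
      nlinarith [abs_nonneg a]
    rw [abs_le]
    obtain ⟨hm₁, hm₂⟩ := abs_le.mp hmul
    obtain ⟨hb₁, hb₂⟩ := abs_le.mp ha
    constructor <;> nlinarith [sq_nonneg a]
  rw [hstep, abs_div, abs_of_pos hD]
  calc _ ≤ 12 * q * √q / q ^ 2 := div_le_div₀ (by positivity) hnum (by positivity) (by linarith)
    _ = 12 / √q := by
      rw [div_eq_div_iff (by positivity) (by positivity)]
      linear_combination 12 * q * hss

lemma abs_recStep_sub_leadingTerm_le {k : ℕ} (hk : 3 ≤ k) {q a x C : ℝ} (hC : 0 ≤ C)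
    (hq : 4 * k + 2 * C + 6 ≤ q) (ha : |a| ≤ 2 * √q) (hx : |x - leadingTerm k q a| ≤ C / √q) :
    |recStep q a (q ^ k) x - leadingTerm (k + 1) q a| ≤ (18 * k ^ 2 + 4 * C) / √q := by
  have hk' : (3 : ℝ) ≤ k := by exact_mod_cast hk
  have hq1 : 1 ≤ q := by linarith
  have hs : 1 ≤ √q := one_le_sqrt.mpr hq1
  have hsq : √q ≤ q := sqrt_le_self_iff.mpr (Or.inr hq1)
  have haq := abs_le_self_of_abs_le_two_mul_sqrt (by linarith) ha
  set L := leadingTerm k q a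
  set u := q ^ k
  have hq3u : q ^ 3 ≤ u := pow_le_pow_right₀ hq1 hk
  have hu : 0 < u := by positivity
  have hkqu : 3 * k * q ≤ u :=
    calc 3 * k * q ≤ q * q := by gcongr; linarith
      _ ≤ q ^ 3 := by nlinarith
      _ ≤ u := hq3u
  have hL : L ≤ 2 := leadingTerm_le_two hk (abs_le.mp haq).2
  have hxL : x - L ≤ C := (le_abs_self _).trans (hx.trans (div_le_self hC hs))
  have hD : u / 2 ≤ u + 1 - x := by nlinarith
  have hB₁ : |q + 1 - L| ≤ 3 * k * q := abs_sub_leadingTerm_le hk hq1 haq (by linarith) (by linarith)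
  have hB₂ : |2 - L| ≤ 3 * k * q := abs_sub_leadingTerm_le hk hq1 haq (by norm_num) (by linarith)
  have hB₃ : |u + L - q - 2| ≤ 2 * u := by
    have := abs_sub_leadingTerm_le hk hq1 haq (c := q + 2) (by linarith) le_rfl
    calc |u + L - q - 2| = |u - (q + 2 - L)| := by ring_nf
      _ ≤ |u| + |q + 2 - L| := abs_sub _ _
      _ ≤ 2 * u := by rw [abs_of_pos hu]; linarith
  rw [leadingTerm_succ]
  calc _ ≤ 2 * (|q + 1 - L| * |2 - L| + |u + L - q - 2| * |x - L|) / u := abs_recStep_sub_le hu hD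
    _ ≤ 2 * (3 * k * q * (3 * k * q) + 2 * u * (C / √q)) / u := by gcongr
    _ = 18 * k ^ 2 * q ^ 2 / u + 4 * C / √q := by field_simp; ring
    _ ≤ 18 * k ^ 2 / √q + 4 * C / √q := by
      have hq2u : q ^ 2 * √q ≤ u := by nlinarith [mul_le_mul_of_nonneg_left hsq (sq_nonneg q)]
      have : 18 * k ^ 2 * q ^ 2 / u ≤ 18 * k ^ 2 / √q := by
        rw [div_le_div_iff₀ hu (by positivity)]
        nlinarith [sq_nonneg (k : ℝ)]
      linarith
    _ = _ := by ring

/-- Weaker asymptotic: a(n) = (5-n) + (n-1)a - (n-1)q + O(1/√q). -/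
theorem a_n_asymptotic (n : ℕ) (hn : 3 ≤ n) :
    ∃ C > (0 : ℝ), ∃ Q₀ : ℝ, ∀ q : ℝ, Q₀ ≤ q → ∀ a : ℝ, |a| ≤ 2 * Real.sqrt q →
      ∀ A : ℕ → ℝ, A 1 = a →
        (∀ k : ℕ, 1 ≤ k →
          A (k + 1) = 1 - q ^ k + a + (q ^ k - q) * (q ^ k - 1) / (q ^ k + 1 - A k)) →
        |A n - ((5 - (n : ℝ)) + ((n : ℝ) - 1) * a - ((n : ℝ) - 1) * q)|
          ≤ C / Real.sqrt q := by
  induction n, hn using Nat.le_induction with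
  | base =>
    refine ⟨12, by norm_num, 4, fun q hq a ha A hA1 hrec => ?_⟩
    have hA2 : A 2 = 1 - q + a := by
      rw [hrec 1 le_rfl, hA1, pow_one, sub_self, zero_mul, zero_div, add_zero]
    rw [hrec 2 (by norm_num), hA2]
    exact abs_recStep_sq_sub_leadingTerm_three_le hq ha
  | succ k hk ih =>
    obtain ⟨C, hC, Q₀, hbound⟩ := ih
    refine ⟨18 * k ^ 2 + 4 * C, by positivity, max Q₀ (4 * k + 2 * C + 6),
      fun q hq a ha A hA1 hrec => ?_⟩
    rw [hrec k (by omega)]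
    exact abs_recStep_sub_leadingTerm_le hk hC.le (le_of_max_le_right hq) ha
      (hbound q (le_of_max_le_left hq) a ha A hA1 hrec)
end

section
/- Let q ≥ 2 and a be real numbers with |a| ≤ 2√q. Define β(n) by β(-1) = 0, β(0) = 1, and (q^n - 1)β(n) = (q^n + q^{n-1} - a)β(n-1) - (q^{n-1} - q)β(n-2) for n ≥ 1. Then β(n) > 0 for all n ≥ 0. -/
/-!
Since `a ≤ 2√q < q + 1`, the recurrence gives `β 1 > 0`, and from then on `β` increases:
if `β (n - 1) ≤ β n` with `β n > 0`, then, as `q ^ n ≥ q`, the recurrence at `n + 1` yields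
`(q ^ (n+1) - 1) β (n+1) ≥ (q ^ (n+1) + q - a) β n > (q ^ (n+1) - 1) β n`.
The comparison is carried along weighted by `q ^ n - q`, which vanishes at `n = 1`, where
`β 0 ≤ β 1` may fail.
-/

lemma lt_add_one_of_abs_le_two_mul_sqrt {q a : ℝ} (hq : 1 < q) (ha : |a| ≤ 2 * Real.sqrt q) :
    a < q + 1 := by
  have hsqrt : 1 < Real.sqrt q := by simpa using Real.sqrt_lt_sqrt zero_le_one hq
  have hsq : Real.sqrt q ^ 2 = q := Real.sq_sqrt (by linarith)
  nlinarith [le_abs_self a, mul_pos (sub_pos.2 hsqrt) (sub_pos.2 hsqrt)]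

lemma lt_of_beta_recurrence {q a P u v w : ℝ} (ha : a < q + 1) (hPq : 1 < P * q) (hu : 0 < u)
    (hvu : (P - q) * v ≤ (P - q) * u)
    (hrec : (P * q - 1) * w = (P * q + P - a) * u - (P - q) * v) :
    u < w := by
  refine lt_of_mul_lt_mul_left ?_ (sub_pos.2 hPq).le
  calc (P * q - 1) * u < (P * q + q - a) * u := by nlinarith
    _ ≤ (P * q - 1) * w := by rw [hrec]; linarith

section BetaRecurrence

variable {q a : ℝ} {β : ℤ → ℝ}

lemma beta_one_pos (hq : 1 < q) (ha : a < q + 1) (h0 : β (-1) = 0) (h1 : β 0 = 1)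
    (hrec : ∀ n : ℤ, 1 ≤ n →
      (q ^ n - 1) * β n = (q ^ n + q ^ (n - 1) - a) * β (n - 1)
        - (q ^ (n - 1) - q) * β (n - 2)) :
    0 < β 1 := by
  have hrec₁ := hrec 1 le_rfl
  norm_num [h0, h1] at hrec₁
  exact pos_of_mul_pos_right (hrec₁ ▸ by linarith) (sub_pos.2 hq).le

lemma beta_pos_and_weighted_mono (hq : 1 < q) (ha : a < q + 1)
    (h0 : β (-1) = 0) (h1 : β 0 = 1)
    (hrec : ∀ n : ℤ, 1 ≤ n →
      (q ^ n - 1) * β n = (q ^ n + q ^ (n - 1) - a) * β (n - 1)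
        - (q ^ (n - 1) - q) * β (n - 2)) :
    ∀ n : ℤ, 1 ≤ n → 0 < β n ∧ (q ^ n - q) * β (n - 1) ≤ (q ^ n - q) * β n := by
  intro n hn
  induction n, hn using Int.leInduction with
  | base => simpa using beta_one_pos hq ha h0 h1 hrec
  | succ n hn ih =>
    have hqn : q ≤ q ^ n := by
      simpa using zpow_le_zpow_right₀ hq.le hn
    have hstep := hrec (n + 1) (by omega)
    rw [add_sub_cancel_right, show n + 1 - 2 = n - 1 by ring,
      zpow_add_one₀ (by positivity)] at hstep
    have hlt : β n < β (n + 1) :=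
      lt_of_beta_recurrence ha (by nlinarith) ih.1 ih.2 hstep
    refine ⟨ih.1.trans hlt, ?_⟩
    rw [add_sub_cancel_right]
    exact mul_le_mul_of_nonneg_left hlt.le (by rw [zpow_add_one₀ (by positivity)]; nlinarith)

end BetaRecurrence

/-- Positivity of the β-invariants under the Hasse bound. -/
theorem beta_pos (q a : ℝ) (hq : 2 ≤ q) (ha : |a| ≤ 2 * Real.sqrt q)
    (β : ℤ → ℝ) (h0 : β (-1) = 0) (h1 : β 0 = 1)
    (hrec : ∀ n : ℤ, 1 ≤ n →
      (q ^ n - 1) * β n = (q ^ n + q ^ (n - 1) - a) * β (n - 1)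
        - (q ^ (n - 1) - q) * β (n - 2)) :
    ∀ n : ℤ, 0 ≤ n → 0 < β n := by
  have hq1 : 1 < q := by linarith
  have haq : a < q + 1 := lt_add_one_of_abs_le_two_mul_sqrt hq1 ha
  intro n hn
  rcases hn.eq_or_lt with rfl | hpos
  · simp [h1]
  · exact (beta_pos_and_weighted_mono hq1 haq h0 h1 hrec n hpos).1
end

section
/- Let q ≥ 2 and a real with |a| ≤ 2√q, and let β(n) be defined by the recursion β(-1)=0, β(0)=1, (q^n-1)β(n) = (q^n + q^{n-1} - a)β(n-1) - (q^{n-1} - q)β(n-2). Then for all n ≥ 2, β(n)/β(n-1) < (√(q^n) + 1)/(√(q^n) - 1). -/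
/-!
Write `q = t²`. For `n ≥ 2` one carries along, by induction, the positivity of `β(n-1)` and `β(n)`,
the lower bound `β(n-1) ≤ q β(n)` and the claimed upper bound `(tⁿ - 1) β(n) < (tⁿ + 1) β(n-1)`.
Feeding the two bounds at `n` into the recursion at `n + 1` reproduces them at `n + 1`: both steps
reduce to polynomial inequalities in `t`, `tⁿ` and `a` that follow from the Hasse bound `|a| ≤ 2t`.
-/

/-- `b₀, b₁` stand for `β(n-1), β(n)` and `s` for `√(qⁿ)`. -/
structure BetaRatioBounds (q s b₀ b₁ : ℝ) : Prop where
  pos_left : 0 < b₀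
  pos_right : 0 < b₁
  le_mul : b₀ ≤ q * b₁
  lt : (s - 1) * b₁ < (s + 1) * b₀

theorem BetaRatioBounds.div_lt_div {q s b₀ b₁ : ℝ} (h : BetaRatioBounds q s b₀ b₁) (hs : 1 < s) :
    b₁ / b₀ < (s + 1) / (s - 1) := by
  rw [div_lt_div_iff₀ h.pos_left (sub_pos.2 hs)]
  linarith [h.lt]

section Step

variable {t s a b₀ b₁ b₂ : ℝ}

theorem beta_step_lower (ht : 1 < t) (hs : t ≤ s) (ha : a ≤ 2 * t) (hb₁ : 0 < b₁)
    (hb₀ : b₀ ≤ t ^ 2 * b₁)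
    (hrec : ((s * t) ^ 2 - 1) * b₂ = ((s * t) ^ 2 + s ^ 2 - a) * b₁ - (s ^ 2 - t ^ 2) * b₀) :
    0 < b₂ ∧ b₁ ≤ t ^ 2 * b₂ := by
  have hst : 0 ≤ s ^ 2 - t ^ 2 := by nlinarith
  have hden : 0 < (s * t) ^ 2 - 1 := by nlinarith [mul_le_mul hs ht.le zero_le_one (by linarith)]
  have hcoef : 0 < s ^ 2 + t ^ 4 - a := by
    nlinarith [sq_nonneg (t ^ 2 - 1), mul_pos (by linarith : 0 < 3 * t + 1) (sub_pos.2 ht)]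
  have hlow : (s ^ 2 + t ^ 4 - a) * b₁ ≤ ((s * t) ^ 2 - 1) * b₂ := by
    nlinarith [mul_le_mul_of_nonneg_left hb₀ hst]
  have hb₂ : 0 < b₂ := pos_of_mul_pos_right ((mul_pos hcoef hb₁).trans_le hlow) hden.le
  refine ⟨hb₂, le_of_mul_le_mul_left ?_ hden⟩
  -- AM–GM: `2t³ ≤ t⁶ + 1`
  have hcube : t ^ 2 * a ≤ t ^ 6 + 1 := by nlinarith [sq_nonneg (t ^ 3 - 1)]
  nlinarith [mul_le_mul_of_nonneg_left hlow (sq_nonneg t)]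

theorem beta_step_upper (ht : 1 < t) (hs : t ≤ s) (ha : -(2 * t) ≤ a) (hb₁ : 0 < b₁)
    (hup : (s - 1) * b₁ < (s + 1) * b₀)
    (hrec : ((s * t) ^ 2 - 1) * b₂ = ((s * t) ^ 2 + s ^ 2 - a) * b₁ - (s ^ 2 - t ^ 2) * b₀) :
    (s * t - 1) * b₂ < (s * t + 1) * b₁ := by
  have hst : 0 ≤ s ^ 2 - t ^ 2 := by nlinarith
  -- the gap is `(s + 1)(a + 2t) + (s - 1)(t - 1)(2s - t + 1)`
  have hgap : (s + 1) * ((s * t) ^ 2 + s ^ 2 - a) - (s ^ 2 - t ^ 2) * (s - 1)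
      < (s + 1) * (s * t + 1) ^ 2 := by
    nlinarith [mul_nonneg (by linarith : 0 ≤ s + 1) (by linarith : 0 ≤ a + 2 * t),
      mul_pos (mul_pos (by linarith : 0 < s - 1) (by linarith : 0 < t - 1))
        (by linarith : 0 < 2 * s - t + 1)]
  have hmul : (s + 1) * (s * t + 1) * ((s * t - 1) * b₂)
      < (s + 1) * (s * t + 1) * ((s * t + 1) * b₁) := by
    nlinarith [mul_le_mul_of_nonneg_left hup.le hst, mul_lt_mul_of_pos_right hgap hb₁]
  have hs0 : 0 < s := by linarith
  exact lt_of_mul_lt_mul_left hmul (by positivity)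

theorem BetaRatioBounds.step (ht : 1 < t) (hs : t ≤ s) (ha : |a| ≤ 2 * t)
    (h : BetaRatioBounds (t ^ 2) s b₀ b₁)
    (hrec : ((s * t) ^ 2 - 1) * b₂ = ((s * t) ^ 2 + s ^ 2 - a) * b₁ - (s ^ 2 - t ^ 2) * b₀) :
    BetaRatioBounds (t ^ 2) (s * t) b₁ b₂ :=
  have hlow := beta_step_lower ht hs (abs_le.1 ha).2 h.pos_right h.le_mul hrec
  ⟨h.pos_right, hlow.1, hlow.2, beta_step_upper ht hs (abs_le.1 ha).1 h.pos_right h.lt hrec⟩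

end Step

theorem betaRatioBounds_of_rec {t a : ℝ} {b : ℕ → ℝ} (ht : 1 < t) (ha : |a| ≤ 2 * t)
    (hb₁ : 0 < b 1)
    (hrec : ∀ k : ℕ, ((t ^ (k + 2)) ^ 2 - 1) * b (k + 2)
      = ((t ^ (k + 2)) ^ 2 + (t ^ (k + 1)) ^ 2 - a) * b (k + 1)
        - ((t ^ (k + 1)) ^ 2 - t ^ 2) * b k) :
    ∀ k : ℕ, BetaRatioBounds (t ^ 2) (t ^ (k + 2)) (b (k + 1)) (b (k + 2))
  -- For `k = 0` the coefficient `t² - t²` of `b 0` vanishes,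
  -- so the step applies with `b 1` in place of `b 0`.
  | 0 => by
    have h : BetaRatioBounds (t ^ 2) t (b 1) (b 1) :=
      ⟨hb₁, hb₁, le_mul_of_one_le_left hb₁.le (by nlinarith), by nlinarith⟩
    simpa [← sq] using h.step ht le_rfl ha (by rw [← sq]; simpa using hrec 0)
  | k + 1 => by
    have hs : t ≤ t ^ (k + 2) := le_self_pow₀ ht.le (by omega)
    simpa [← pow_succ] using (betaRatioBounds_of_rec ht ha hb₁ hrec k).step ht hs ha (hrec (k + 1))

/-- Upper bound of Weng–Zagier: β(n)/β(n-1) < (√(q^n)+1)/(√(q^n)-1) for n ≥ 2. -/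
theorem beta_ratio_upper (q a : ℝ) (hq : 2 ≤ q) (ha : |a| ≤ 2 * Real.sqrt q)
    (β : ℤ → ℝ) (h0 : β (-1) = 0) (h1 : β 0 = 1)
    (hrec : ∀ n : ℤ, 1 ≤ n →
      (q ^ n - 1) * β n = (q ^ n + q ^ (n - 1) - a) * β (n - 1)
        - (q ^ (n - 1) - q) * β (n - 2)) :
    ∀ n : ℤ, 2 ≤ n →
      β n / β (n - 1) < (Real.sqrt (q ^ n) + 1) / (Real.sqrt (q ^ n) - 1) := by
  obtain ⟨t, ht0, rfl⟩ : ∃ t, 0 ≤ t ∧ q = t ^ 2 :=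
    ⟨√q, Real.sqrt_nonneg q, (Real.sq_sqrt (by linarith)).symm⟩
  rw [Real.sqrt_sq ht0] at ha
  have ht : 1 < t := by nlinarith
  have hpow (m : ℕ) : (t ^ 2) ^ (m : ℤ) = (t ^ m) ^ 2 := by
    rw [zpow_natCast, ← pow_mul, ← pow_mul, mul_comm]
  have hb₁ : 0 < β 1 := by
    have h := hrec 1 le_rfl
    norm_num [h0, h1] at h
    have hpos : 0 < t ^ 2 + 1 - a := by nlinarith [(abs_le.1 ha).2]
    exact pos_of_mul_pos_right (h ▸ hpos) (by nlinarith)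
  have hsub₁ (k : ℕ) : ((k + 2 : ℕ) : ℤ) - 1 = (k + 1 : ℕ) := by push_cast; ring
  have hsub₂ (k : ℕ) : ((k + 2 : ℕ) : ℤ) - 2 = k := by push_cast; ring
  have hrecℕ (k : ℕ) : ((t ^ (k + 2)) ^ 2 - 1) * β (k + 2 : ℕ)
      = ((t ^ (k + 2)) ^ 2 + (t ^ (k + 1)) ^ 2 - a) * β (k + 1 : ℕ)
        - ((t ^ (k + 1)) ^ 2 - t ^ 2) * β k := by
    simpa only [hsub₁, hsub₂, hpow] using hrec (k + 2 : ℕ) (by omega)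
  intro n hn
  obtain ⟨k, rfl⟩ : ∃ k : ℕ, n = (k + 2 : ℕ) := ⟨(n - 2).toNat, by omega⟩
  rw [hpow, Real.sqrt_sq (by positivity), hsub₁]
  exact (betaRatioBounds_of_rec (b := fun k : ℕ => β k) ht ha hb₁ hrecℕ k).div_lt_div
    (one_lt_pow₀ ht (by omega))
end

section
/- Let q ≥ 2 and a real with |a| ≤ 2√q. Define a(3) := 1 - q² + a + (q² - q)(q² - 1)/(q² + q - a). Then a(3) < 2 and a(3) > -2·q^{3/2} for all sufficiently large q (e.g. q ≥ 16). -/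
/-!
Write `q = s²` with `s = √q > 1`. After clearing the positive denominator `q² + q - a`, both
inequalities become polynomial in `s` and `a` whose `a`-dependence is controlled on `|a| ≤ 2s`:
the upper bound is a quadratic in `a` decreasing on that interval, the lower bound a concave
quadratic in `a`, so it suffices to look at `a = ±2s`, where the polynomials factor with the
positive factors `(s - 1)²(s³ - 1)`, `(s - 1)²(s + 1)(s³ + 1)` and `(s - 1)(s⁵ + 3s³ + s² + 2s + 1)`.
-/

/-- The rank-3 invariant `a(3)` of an elliptic curve over `𝔽_q` with Frobenius trace `a`. -/
noncomputable def aThree (q a : ℝ) : ℝ :=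
  1 - q ^ 2 + a + (q ^ 2 - q) * (q ^ 2 - 1) / (q ^ 2 + q - a)

section

variable {s a : ℝ}

lemma aThree_denom_pos (hs : 1 < s) (ha : a ≤ 2 * s) : 0 < (s ^ 2) ^ 2 + s ^ 2 - a := by
  have : s < s ^ 2 := by nlinarith
  have : s ^ 2 < (s ^ 2) ^ 2 := by nlinarith
  linarith

lemma aThree_lt_two (hs : 1 < s) (ha : a ≤ 2 * s) : aThree (s ^ 2) a < 2 := by
  have hD := aThree_denom_pos hs ha
  have key : (1 + (s ^ 2) ^ 2 - a) * ((s ^ 2) ^ 2 + s ^ 2 - a)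
      - ((s ^ 2) ^ 2 - s ^ 2) * ((s ^ 2) ^ 2 - 1)
      = 2 * s * (s - 1) ^ 2 * (s ^ 3 - 1) + (2 * s - a) * (2 * s ^ 4 + s ^ 2 + 1 - 2 * s - a) := by
    ring
  have hcorner : 0 < 2 * s * (s - 1) ^ 2 * (s ^ 3 - 1) := by
    have : 1 < s ^ 3 := one_lt_pow₀ hs (by norm_num)
    have : 0 < (s - 1) ^ 2 := by nlinarith
    positivity
  have hslope : 0 ≤ (2 * s - a) * (2 * s ^ 4 + s ^ 2 + 1 - 2 * s - a) :=
    mul_nonneg (by linarith) (by nlinarith)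
  unfold aThree
  have : ((s ^ 2) ^ 2 - s ^ 2) * ((s ^ 2) ^ 2 - 1) / ((s ^ 2) ^ 2 + s ^ 2 - a)
      < 1 + (s ^ 2) ^ 2 - a := by
    rw [div_lt_iff₀ hD]
    linarith
  linarith

lemma neg_two_mul_pow_three_lt_aThree (hs : 1 < s) (ha : |a| ≤ 2 * s) :
    -2 * s ^ 3 < aThree (s ^ 2) a := by
  obtain ⟨ha₁, ha₂⟩ := abs_le.mp ha
  have hD := aThree_denom_pos hs ha₂
  -- Concavity in `a`: the left side is the linear interpolation of its values at `a = ±2s`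
  -- plus `2 (2s - a)(2s + a)`.
  have key : 2 * (((s ^ 2) ^ 2 - s ^ 2) * ((s ^ 2) ^ 2 - 1)
        - ((s ^ 2) ^ 2 - 1 - 2 * s ^ 3 - a) * ((s ^ 2) ^ 2 + s ^ 2 - a))
      = (2 * s - a) * ((s - 1) ^ 2 * (s + 1) * (s ^ 3 + 1))
        + (2 * s + a) * ((s - 1) * (s ^ 5 + 3 * s ^ 3 + s ^ 2 + 2 * s + 1))
        + 2 * ((2 * s - a) * (2 * s + a)) := by
    ring
  have hleft : 0 < (s - 1) ^ 2 * (s + 1) * (s ^ 3 + 1) := by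
    have : 0 < (s - 1) ^ 2 := by nlinarith
    have : 0 < s := by linarith
    positivity
  have hright : 0 < (s - 1) * (s ^ 5 + 3 * s ^ 3 + s ^ 2 + 2 * s + 1) := by
    have : 0 < s - 1 := by linarith
    have : 0 < s := by linarith
    positivity
  have hcorners : 0 < (2 * s - a) * ((s - 1) ^ 2 * (s + 1) * (s ^ 3 + 1))
      + (2 * s + a) * ((s - 1) * (s ^ 5 + 3 * s ^ 3 + s ^ 2 + 2 * s + 1)) := by
    rcases le_or_gt a 0 with h | h
    · nlinarith [mul_nonneg (by linarith : (0 : ℝ) ≤ 2 * s + a) hright.le]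
    · nlinarith [mul_nonneg (by linarith : (0 : ℝ) ≤ 2 * s - a) hleft.le]
  have hcurv : 0 ≤ (2 * s - a) * (2 * s + a) := mul_nonneg (by linarith) (by linarith)
  unfold aThree
  have : -2 * s ^ 3 - (1 - (s ^ 2) ^ 2 + a)
      < ((s ^ 2) ^ 2 - s ^ 2) * ((s ^ 2) ^ 2 - 1) / ((s ^ 2) ^ 2 + s ^ 2 - a) := by
    rw [lt_div_iff₀ hD]
    linarith
  linarith

end

/-- Refined Weng–Zagier bounds in rank 3: 2 > a(3) > -2√(q³) for q ≥ 16. -/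
theorem a_three_bounds (q a : ℝ) (hq : 16 ≤ q) (ha : |a| ≤ 2 * Real.sqrt q) :
    (1 - q ^ 2 + a + (q ^ 2 - q) * (q ^ 2 - 1) / (q ^ 2 + q - a) < 2)
    ∧ (-2 * Real.sqrt (q ^ 3)
        < 1 - q ^ 2 + a + (q ^ 2 - q) * (q ^ 2 - 1) / (q ^ 2 + q - a)) := by
  obtain ⟨s, hs, rfl⟩ : ∃ s, 1 < s ∧ q = s ^ 2 :=
    ⟨√q, Real.lt_sqrt_of_sq_lt (by linarith), (Real.sq_sqrt (by linarith)).symm⟩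
  have hs₀ : 0 ≤ s := by linarith
  rw [Real.sqrt_sq hs₀] at ha
  rw [show (s ^ 2) ^ 3 = (s ^ 3) ^ 2 by ring, Real.sqrt_sq (by positivity)]
  exact ⟨aThree_lt_two hs (abs_le.mp ha).2, neg_two_mul_pow_three_lt_aThree hs ha⟩
end

section
/- Let q ≥ 2 and a be real with |a| ≤ 2√q. Define a(n) by a(1) = a and a(n+1) = 1 - q^n + a + (q^n - q)(q^n - 1)/(q^n + 1 - a(n)), assuming q^n + 1 - a(n) > 0 at each step. Then for every fixed n ≥ 3 there is Q₀(n) such that for q ≥ Q₀(n), a(n) < 0; in fact a(n) ≤ -(n-1)q/2. -/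
/-!
By induction on `k ≥ 2`, `A k ≤ 3k - 5 + (k - 1)(a - q) = -c_k` with `c_k = gap q a k`; at `k = 2`
this is an equality, since the fraction vanishes. If `A k ≤ -c`, the denominator of the recursion
is at least `q^k + 1 + c`, and `(q^k - q)(q^k - 1) ≤ (q^k - q - c + 2)(q^k + 1 + c)` is equivalent
to `(q + c - 2)(1 + c) + q ≤ 4q^k`. That holds for large `q` because `c_k = O(kq)` while `q^k ≥ q³`
once `k ≥ 3`, and the resulting bound on the fraction is exactly `A (k + 1) ≤ -c_(k+1)`. The Hasse
bound is only used as `|a| ≤ q/2 - 3`, which makes `c_n ≥ (n - 1)q/2 + 2`.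
-/

theorem abs_le_half_sub_three_of_abs_le_two_sqrt {q a : ℝ} (hq : 36 ≤ q)
    (ha : |a| ≤ 2 * √q) : |a| ≤ q / 2 - 3 := by
  have hs : 6 ≤ √q := (Real.le_sqrt' (by norm_num)).mpr (by linarith)
  have hsq : √q ^ 2 = q := Real.sq_sqrt (by linarith)
  nlinarith

def gap (q a : ℝ) (k : ℕ) : ℝ := (k - 1) * (q - a) - (3 * k - 5)

section Gap

variable {q a : ℝ}

theorem gap_two : gap q a 2 = q - a - 1 := by
  norm_num [gap]

theorem gap_succ (k : ℕ) : gap q a (k + 1) = gap q a k + (q - a) - 3 := by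
  simp only [gap]; push_cast; ring

theorem half_mul_add_two_le_gap (ha : |a| ≤ q / 2 - 3) {k : ℕ} (hk : 1 ≤ k) :
    (k - 1) * q / 2 + 2 ≤ gap q a k := by
  have hk' : (1 : ℝ) ≤ k := by exact_mod_cast hk
  have ha' : a ≤ q / 2 - 3 := (abs_le.mp ha).2
  have : (k - 1) * (q / 2) ≤ (k - 1) * (q - a - 3) := by gcongr; linarith
  simp only [gap]; linarith

theorem gap_nonneg (ha : |a| ≤ q / 2 - 3) {k : ℕ} (hk : 1 ≤ k) : 0 ≤ gap q a k := by
  have hk' : (1 : ℝ) ≤ k := by exact_mod_cast hk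
  have hq : 6 ≤ q := by linarith [abs_nonneg a]
  have := half_mul_add_two_le_gap ha hk
  nlinarith

theorem step_condition_two (ha : |a| ≤ q / 2 - 3) :
    (q + gap q a 2 - 2) * (1 + gap q a 2) + q ≤ 4 * q ^ 2 := by
  rw [gap_two]
  obtain ⟨ha₁, ha₂⟩ := abs_le.mp ha
  have hq : 6 ≤ q := by linarith
  have hsq : a ^ 2 ≤ (q / 2 - 3) ^ 2 := sq_le_sq' ha₁ ha₂
  nlinarith [mul_nonneg (by linarith : (0 : ℝ) ≤ q) (by linarith : 0 ≤ q / 2 - 3 + a)]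

theorem step_condition_of_sq_le (ha : |a| ≤ q / 2 - 3) {k : ℕ} (hk : 3 ≤ k)
    (hkq : (k : ℝ) ^ 2 ≤ q) :
    (q + gap q a k - 2) * (1 + gap q a k) + q ≤ 4 * q ^ k := by
  have hk' : (3 : ℝ) ≤ k := by exact_mod_cast hk
  have ha' : -a ≤ q / 2 := by linarith [(abs_le.mp ha).1]
  have hq : 6 ≤ q := by linarith [abs_nonneg a]
  have hc := gap_nonneg ha (by omega : 1 ≤ k)
  have hc_le : gap q a k ≤ (k - 1) * (3 * q / 2) - 4 := by
    have : (k - 1) * (q - a) ≤ (k - 1) * (3 * q / 2) := by gcongr <;> linarith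
    simp only [gap]; linarith
  calc (q + gap q a k - 2) * (1 + gap q a k) + q
      ≤ (3 * k * q / 2) * (3 * k * q / 2) + q := by
        gcongr <;> linarith
    _ = 9 / 4 * (k ^ 2 * q ^ 2) + q := by ring
    _ ≤ 9 / 4 * (q * q ^ 2) + q * q ^ 2 := by gcongr; nlinarith
    _ ≤ 4 * q ^ 3 := by nlinarith
    _ ≤ 4 * q ^ k := by gcongr; linarith

end Gap

theorem recursion_fraction_le {X q c y : ℝ} (hq : 1 ≤ q) (hqX : q ≤ X) (hc : 0 ≤ c)
    (hy : y ≤ -c) (hX : (q + c - 2) * (1 + c) + q ≤ 4 * X) :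
    (X - q) * (X - 1) / (X + 1 - y) ≤ X - q - c + 2 := by
  have hden : 0 < X + 1 + c := by linarith
  calc (X - q) * (X - 1) / (X + 1 - y)
      ≤ (X - q) * (X - 1) / (X + 1 + c) := by
        gcongr
        · exact mul_nonneg (by linarith) (by linarith)
        · linarith
    _ ≤ X - q - c + 2 := by
        rw [div_le_iff₀ hden]
        linear_combination hX

theorem le_neg_gap {q a : ℝ} {A : ℕ → ℝ} (ha : |a| ≤ q / 2 - 3)
    (hrec : ∀ k : ℕ, 1 ≤ k →
      A (k + 1) = 1 - q ^ k + a + (q ^ k - q) * (q ^ k - 1) / (q ^ k + 1 - A k))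
    {k : ℕ} (hk : 2 ≤ k) (hkq : ((k : ℝ) - 1) ^ 2 ≤ q) : A k ≤ -gap q a k := by
  have hq : 1 ≤ q := by linarith [abs_nonneg a]
  induction k, hk using Nat.le_induction with
  | base =>
    rw [hrec 1 le_rfl, gap_two, pow_one, sub_self, zero_mul, zero_div]
    linarith
  | succ k hk ih =>
    have hk' : (2 : ℝ) ≤ k := by exact_mod_cast hk
    push_cast at hkq
    have hkq' : (k : ℝ) ^ 2 ≤ q := by linarith
    have hcond : (q + gap q a k - 2) * (1 + gap q a k) + q ≤ 4 * q ^ k := by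
      rcases hk.eq_or_lt with rfl | hk3
      · exact step_condition_two ha
      · exact step_condition_of_sq_le ha hk3 hkq'
    have hfrac := recursion_fraction_le hq (le_self_pow₀ hq (by omega)) (gap_nonneg ha (by omega))
      (ih (by nlinarith)) hcond
    rw [hrec k (by omega), gap_succ]
    linarith

/-- For fixed n ≥ 3 and q large, a(n) is very negative: a(n) ≤ -(n-1)q/2 < 0. -/
theorem a_n_negative (n : ℕ) (hn : 3 ≤ n) :
    ∃ Q₀ : ℝ, ∀ q : ℝ, Q₀ ≤ q → ∀ a : ℝ, |a| ≤ 2 * Real.sqrt q →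
      ∀ A : ℕ → ℝ, A 1 = a →
        (∀ k : ℕ, 1 ≤ k → 0 < q ^ k + 1 - A k) →
        (∀ k : ℕ, 1 ≤ k →
          A (k + 1) = 1 - q ^ k + a + (q ^ k - q) * (q ^ k - 1) / (q ^ k + 1 - A k)) →
        A n < 0 ∧ A n ≤ -((n : ℝ) - 1) * q / 2 := by
  refine ⟨max 36 (((n : ℝ) - 1) ^ 2), fun q hq a ha A _ _ hrec => ?_⟩
  have ha' := abs_le_half_sub_three_of_abs_le_two_sqrt (le_of_max_le_left hq) ha
  have hAn := le_neg_gap ha' hrec (by omega) (le_of_max_le_right hq)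
  have hgap := half_mul_add_two_le_gap ha' (by omega : 1 ≤ n)
  have hnq : 0 ≤ ((n : ℝ) - 1) * q := by
    have : (1 : ℝ) ≤ n := by exact_mod_cast (by omega : 1 ≤ n)
    have : 0 ≤ q := by linarith [abs_nonneg a]
    positivity
  constructor <;> linarith
end

section
/- Let q ≥ 2 and a real with |a| ≤ 2√q, and let β(n) satisfy β(-1)=0, β(0)=1, (q^n-1)β(n) = (q^n + q^{n-1} - a)β(n-1) - (q^{n-1} - q)β(n-2). Then the a-invariants a(n) := (q^n + 1) - (q^n - 1)β(n)/β(n-1) satisfy q^n + 1 - a(n) = (q^n - 1)β(n)/β(n-1) > 0 for all n ≥ 1, so the structural recursion a(n+1) = 1 - q^n + a + (q^n - q)(q^n - 1)/(q^n + 1 - a(n)) is well-defined (no division by zero) for all n ≥ 1. -/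
/-!
The quotient `(q^n - 1) β(n) / β(n-1)` is positive as soon as `β` is positive on `ℕ`. Positivity
propagates along the recurrence through the stronger invariant
`(q^(m+2) - q^(m+1)) β(m+1) ≤ (q^(m+2) - 1) β(m+2)`, i.e. `q^n + 1 - a(n) ≥ q^n - q^(n-1)` for
`n ≥ 2`. Its inductive step reduces to the coefficient inequality `(y - q)(y - 1) ≤ (2y - a)(y - y/q)`
for `y = q^n ≥ q`, which holds because Hasse's bound gives `a ≤ 2√q < q + 1`.
-/

open Real

lemma two_mul_sqrt_lt_add_one {q : ℝ} (hq : 1 < q) : 2 * √q < q + 1 := by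
  have hsq : √q ^ 2 = q := sq_sqrt (by linarith)
  have hone : 1 < √q := by rwa [lt_sqrt zero_le_one, one_pow]
  nlinarith [mul_pos (sub_pos.2 hone) (sub_pos.2 hone)]

lemma sub_mul_sub_le_two_mul_sub_mul_sub {q a x y : ℝ} (hq : 2 ≤ q) (ha : a ≤ q + 1)
    (hy : q ≤ y) (hxy : x * q = y) :
    (y - q) * (y - 1) ≤ (2 * y - a) * (y - x) := by
  suffices q * ((y - q) * (y - 1)) ≤ q * ((2 * y - a) * (y - x)) from
    le_of_mul_le_mul_left this (by linarith)
  have hdiff : q * (y - x) = y * (q - 1) := by rw [← hxy]; ring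
  have hslack : 0 ≤ (q - 2) * y ^ 2 + (q + 1) * y - q ^ 2 := by
    nlinarith [mul_nonneg (sub_nonneg.2 hq) (mul_nonneg (by linarith : (0 : ℝ) ≤ y) (sub_nonneg.2 hy))]
  nlinarith [mul_nonneg (mul_nonneg (by linarith : (0 : ℝ) ≤ y) (by linarith : (0 : ℝ) ≤ q - 1))
    (sub_nonneg.2 ha)]

section Recurrence

variable {q a : ℝ} {b : ℕ → ℝ} {m : ℕ}

lemma pos_of_ratio_lower_bound (hq : 1 < q) (hb : 0 < b (m + 1))
    (h : (q ^ (m + 2) - q ^ (m + 1)) * b (m + 1) ≤ (q ^ (m + 2) - 1) * b (m + 2)) :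
    0 < b (m + 2) := by
  have hgap : 0 < q ^ (m + 2) - q ^ (m + 1) :=
    sub_pos.2 (pow_lt_pow_right₀ hq (by omega))
  have hcoef : 0 < q ^ (m + 2) - 1 := sub_pos.2 (one_lt_pow₀ hq (by omega))
  exact pos_of_mul_pos_right ((mul_pos hgap hb).trans_le h) hcoef.le

lemma ratio_lower_bound_succ (hq : 2 ≤ q) (ha : a ≤ q + 1) (hb : 0 ≤ b (m + 2))
    (hrec : (q ^ (m + 3) - 1) * b (m + 3)
      = (q ^ (m + 3) + q ^ (m + 2) - a) * b (m + 2) - (q ^ (m + 2) - q) * b (m + 1))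
    (h : (q ^ (m + 2) - q ^ (m + 1)) * b (m + 1) ≤ (q ^ (m + 2) - 1) * b (m + 2)) :
    (q ^ (m + 3) - q ^ (m + 2)) * b (m + 2) ≤ (q ^ (m + 3) - 1) * b (m + 3) := by
  set y := q ^ (m + 2)
  set x := q ^ (m + 1)
  have hxy : x * q = y := (pow_succ q (m + 1)).symm
  have hyq : y * q = q ^ (m + 3) := (pow_succ q (m + 2)).symm
  have hqy : q ≤ y := le_self_pow₀ (by linarith) (by omega)
  have hgap : 0 < y - x := by
    nlinarith [pow_pos (by linarith : (0 : ℝ) < q) (m + 1)]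
  have hcoef := sub_mul_sub_le_two_mul_sub_mul_sub hq ha hqy hxy
  suffices (y - q) * b (m + 1) ≤ (2 * y - a) * b (m + 2) by
    rw [hrec, ← hyq]; linarith
  refine le_of_mul_le_mul_left ?_ hgap
  calc (y - x) * ((y - q) * b (m + 1))
      = (y - q) * ((y - x) * b (m + 1)) := by ring
    _ ≤ (y - q) * ((y - 1) * b (m + 2)) := mul_le_mul_of_nonneg_left h (by linarith)
    _ = (y - q) * (y - 1) * b (m + 2) := by ring
    _ ≤ (2 * y - a) * (y - x) * b (m + 2) := mul_le_mul_of_nonneg_right hcoef hb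
    _ = (y - x) * ((2 * y - a) * b (m + 2)) := by ring

lemma pos_of_recurrence (hq : 2 ≤ q) (ha : a < q + 1) (hb0 : 0 < b 0)
    (hb1 : (q - 1) * b 1 = (q + 1 - a) * b 0)
    (hrec : ∀ m : ℕ, (q ^ (m + 2) - 1) * b (m + 2)
      = (q ^ (m + 2) + q ^ (m + 1) - a) * b (m + 1) - (q ^ (m + 1) - q) * b m) :
    ∀ m, 0 < b m := by
  have invariant : ∀ m : ℕ, 0 < b (m + 1) ∧
      (q ^ (m + 2) - q ^ (m + 1)) * b (m + 1) ≤ (q ^ (m + 2) - 1) * b (m + 2) := by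
    intro m
    induction m with
    | zero =>
      have hb1_pos : 0 < b 1 :=
        pos_of_mul_pos_right (hb1 ▸ mul_pos (by linarith) hb0) (by linarith)
      refine ⟨hb1_pos, ?_⟩
      rw [hrec 0, zero_add, pow_one, sub_self, zero_mul, sub_zero]
      exact mul_le_mul_of_nonneg_right (by linarith) hb1_pos.le
    | succ m ih =>
      have hb := pos_of_ratio_lower_bound (by linarith) ih.1 ih.2
      exact ⟨hb, ratio_lower_bound_succ hq ha.le hb.le (hrec (m + 1)) ih.2⟩
  rintro (_ | m)
  exacts [hb0, (invariant m).1]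

end Recurrence

lemma recurrence_natCast {q a : ℝ} {β : ℤ → ℝ}
    (hrec : ∀ n : ℤ, 1 ≤ n →
      (q ^ n - 1) * β n = (q ^ n + q ^ (n - 1) - a) * β (n - 1) - (q ^ (n - 1) - q) * β (n - 2))
    (m : ℕ) :
    (q ^ (m + 2) - 1) * β (m + 2 : ℕ)
      = (q ^ (m + 2) + q ^ (m + 1) - a) * β (m + 1 : ℕ) - (q ^ (m + 1) - q) * β m := by
  have h := hrec ((m + 2 : ℕ) : ℤ) (by omega)
  rwa [show ((m + 2 : ℕ) : ℤ) - 1 = ((m + 1 : ℕ) : ℤ) by omega,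
    show ((m + 2 : ℕ) : ℤ) - 2 = (m : ℤ) by omega, zpow_natCast, zpow_natCast] at h

/-- The denominator in the structural recursion never vanishes:
q^n + 1 - a(n) = (q^n - 1)β(n)/β(n-1) > 0 for all n ≥ 1. -/
theorem denominator_pos (q a : ℝ) (hq : 2 ≤ q) (ha : |a| ≤ 2 * Real.sqrt q)
    (β : ℤ → ℝ) (h0 : β (-1) = 0) (h1 : β 0 = 1)
    (hrec : ∀ n : ℤ, 1 ≤ n →
      (q ^ n - 1) * β n = (q ^ n + q ^ (n - 1) - a) * β (n - 1)
        - (q ^ (n - 1) - q) * β (n - 2)) :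
    ∀ n : ℤ, 1 ≤ n →
      q ^ n + 1 - ((q ^ n + 1) - (q ^ n - 1) * β n / β (n - 1))
        = (q ^ n - 1) * β n / β (n - 1)
      ∧ 0 < (q ^ n - 1) * β n / β (n - 1) := by
  have ha' : a < q + 1 := (le_of_abs_le ha).trans_lt (two_mul_sqrt_lt_add_one (by linarith))
  have hb1 : (q - 1) * β (1 : ℕ) = (q + 1 - a) * β (0 : ℕ) := by
    simpa [h0, h1] using hrec 1 le_rfl
  have hpos : ∀ m : ℕ, 0 < β m :=
    pos_of_recurrence (b := fun m : ℕ => β m) hq ha' (by simp [h1]) hb1 (recurrence_natCast hrec)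
  intro n hn
  obtain ⟨m, rfl⟩ : ∃ m : ℕ, n = m + 1 := ⟨(n - 1).toNat, by omega⟩
  refine ⟨by ring, div_pos (mul_pos ?_ ?_) ?_⟩
  · exact sub_pos.2 (one_lt_zpow₀ (by linarith) (by omega))
  · exact_mod_cast hpos (m + 1)
  · simpa using hpos m
end
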